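/- Let g₁, g₂ ∈ H_𝒜 with g₁ coordinately invertible. If for every x ∈ H_𝒜 the equality ⟨x, g₁⟩ = 0 implies ⟨x, g₂⟩ = 0, then there exists a ∈ 𝒜 such that g₂ = a·g₁. -/

import Mathlib

/-- An axiomatization of the standard Hilbert C*-module `H_𝒜 = ℓ²(ℕ, 𝒜)` over a unital
C*-algebra `𝒜`: a left `𝒜`-module with an `𝒜`-valued inner product, `𝒜`-linear in the
first variable and conjugate `𝒜`-linear in the second, complete in the norm
`‖v‖ = ‖⟨v,v⟩‖^{1/2}`, together with a standard orthonormal basis `e : ℕ → M` whose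
`𝒜`-linear span is dense. -/
structure StdHilbertModule (A : Type*) [CStarAlgebra A]
    (M : Type*) [NormedAddCommGroup M] [Module A M] where
  inner : M → M → A
  inner_add_left : ∀ x y z : M, inner (x + y) z = inner x z + inner y z
  inner_add_right : ∀ x y z : M, inner x (y + z) = inner x y + inner x z
  inner_smul_left : ∀ (a : A) (x y : M), inner (a • x) y = a * inner x y
  inner_smul_right : ∀ (a : A) (x y : M), inner x (a • y) = inner x y * star a
  star_inner : ∀ x y : M, star (inner x y) = inner y x
  inner_self_nonneg : ∀ x : M, ∃ a : A, inner x x = star a * a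
  norm_eq : ∀ x : M, ‖x‖ = Real.sqrt ‖inner x x‖
  complete : CompleteSpace M
  e : ℕ → M
  inner_e : ∀ i j : ℕ, inner (e i) (e j) = if i = j then 1 else 0
  dense_span : Dense ((Submodule.span A (Set.range e) : Submodule A M) : Set M)

namespace StdHilbertModule

variable {A : Type*} [CStarAlgebra A] {M : Type*} [NormedAddCommGroup M] [Module A M]
  (S : StdHilbertModule A M)

/-- `x` is coordinately invertible: `x ≠ 0` and each `⟨e i, x⟩` is invertible or zero. -/
def CI (x : M) : Prop :=
  x ≠ 0 ∧ ∀ i : ℕ, IsUnit (S.inner (S.e i) x) ∨ S.inner (S.e i) x = 0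

/-- The "rank one" operator `θ_{x,y} : ξ ↦ ⟨ξ,y⟩ • x`. -/
def theta (x y : M) : M → M := fun ξ => S.inner ξ y • x

/-- `𝓕(H_𝒜)`: all finite sums `Σ αᵢ θ_{xᵢ,yᵢ}`. -/
def FinRank : Set (M → M) :=
  {T | ∃ (n : ℕ) (α : Fin n → A) (x y : Fin n → M),
    T = ∑ i : Fin n, α i • S.theta (x i) (y i)}

/-- `L_x = {θ_{x,g} : g ∈ H_𝒜}`. -/
def Lset (x : M) : Set (M → M) := {T | ∃ g : M, T = S.theta x g}

/-- `R_f = {θ_{z,f} : z ∈ H_𝒜}`. -/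
def Rset (f : M) : Set (M → M) := {T | ∃ z : M, T = S.theta z f}

/-- `L_x^{CI} = {θ_{x,g} : g ∈ CI}`. -/
def LCI (x : M) : Set (M → M) := {T | ∃ g : M, S.CI g ∧ T = S.theta x g}

/-- `R_f^{CI} = {θ_{z,f} : z ∈ CI}`. -/
def RCI (f : M) : Set (M → M) := {T | ∃ z : M, S.CI z ∧ T = S.theta z f}

/-- `Φ` is rank-one preserving. -/
def RankOnePreserving (Φ : (M → M) → (M → M)) : Prop :=
  ∀ x y : M, S.CI y → ∃ s t : M, S.CI t ∧ Φ (S.theta x y) = S.theta s t ∧ (x ≠ 0 → s ≠ 0)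

/-- `Φ` maps `𝓕(H_𝒜)` into `𝓕(H_𝒜)`. -/
def MapsFinRank (Φ : (M → M) → (M → M)) : Prop :=
  ∀ T ∈ S.FinRank, Φ T ∈ S.FinRank

/-- `Φ` is additive on `𝓕(H_𝒜)`. -/
def AdditiveOn (Φ : (M → M) → (M → M)) : Prop :=
  ∀ T U : M → M, T ∈ S.FinRank → U ∈ S.FinRank → Φ (T + U) = Φ T + Φ U

/-- `Dim_𝒜 Φ(L_x^{CI}) ≥ 2`. -/
def DimGe2 (Φ : (M → M) → (M → M)) (x : M) : Prop :=
  ∃ f₁ f₂ y₁ y₂ g₁ g₂ : M, S.CI f₁ ∧ S.CI f₂ ∧ S.CI g₁ ∧ S.CI g₂ ∧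
    Φ (S.theta x f₁) = S.theta y₁ g₁ ∧ Φ (S.theta x f₂) = S.theta y₂ g₂ ∧
    ∀ α : A, g₁ ≠ α • g₂

end StdHilbertModule

/-! A coordinate `u = ⟨e i, g₁⟩` that is a unit splits every `x` as `(⟨x, g₁⟩ u⁻¹) • e i` plus a
vector of `ker ⟨·, g₁⟩ ⊆ ker ⟨·, g₂⟩`, so `⟨x, g₂⟩ = ⟨x, g₁⟩ u⁻¹ ⟨e i, g₂⟩ = ⟨x, a • g₁⟩` with
`a = (u⁻¹ ⟨e i, g₂⟩)⋆`. Elements of `H_𝒜` are determined by their coordinates: if `v` is orthogonal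
to the dense span of the basis then `⟨v - x, v - x⟩ = ⟨v, v⟩ + ⟨x, x⟩ ≥ ⟨v, v⟩` for `x` in the span,
so `‖v‖ ≤ ‖v - x‖` can be made arbitrarily small. -/

namespace StdHilbertModule

variable {A : Type*} [CStarAlgebra A] {M : Type*} [NormedAddCommGroup M] [Module A M]
  (S : StdHilbertModule A M)

def innerLeft (v : M) : M →ₗ[A] A where
  toFun x := S.inner x v
  map_add' x y := S.inner_add_left x y v
  map_smul' a x := S.inner_smul_left a x v

lemma inner_sub_left (x y z : M) : S.inner (x - y) z = S.inner x z - S.inner y z :=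
  map_sub (S.innerLeft z) x y

lemma inner_sub_right (x y z : M) : S.inner x (y - z) = S.inner x y - S.inner x z := by
  rw [← S.star_inner, inner_sub_left, star_sub, S.star_inner, S.star_inner]

lemma zero_le_inner_self [PartialOrder A] [StarOrderedRing A] (x : M) : 0 ≤ S.inner x x := by
  obtain ⟨a, ha⟩ := S.inner_self_nonneg x
  exact ha ▸ star_mul_self_nonneg a

lemma norm_le_norm_sub_of_inner_eq_zero [PartialOrder A] [StarOrderedRing A] {x v : M}
    (h : S.inner x v = 0) : ‖v‖ ≤ ‖v - x‖ := by
  have hpyth : S.inner (v - x) (v - x) = S.inner v v + S.inner x x := by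
    rw [inner_sub_left, inner_sub_right, inner_sub_right, h, ← S.star_inner x v, h]
    simp
  have hle : S.inner v v ≤ S.inner (v - x) (v - x) :=
    hpyth ▸ le_add_of_nonneg_right (S.zero_le_inner_self x)
  rw [S.norm_eq, S.norm_eq]
  exact Real.sqrt_le_sqrt (CStarAlgebra.norm_le_norm_of_nonneg_of_le (S.zero_le_inner_self v) hle)

lemma eq_zero_of_forall_inner_e_eq_zero {v : M} (hv : ∀ i, S.inner (S.e i) v = 0) : v = 0 := by
  let _ := CStarAlgebra.spectralOrder A
  have := CStarAlgebra.spectralOrderedRing A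
  have horth : Submodule.span A (Set.range S.e) ≤ LinearMap.ker (S.innerLeft v) :=
    Submodule.span_le.mpr (Set.range_subset_iff.mpr hv)
  refine norm_le_zero_iff.mp (le_of_forall_pos_lt_add fun ε hε => ?_)
  obtain ⟨x, hx, hvx⟩ := Metric.mem_closure_iff.mp (S.dense_span v) ε hε
  calc ‖v‖ ≤ ‖v - x‖ := S.norm_le_norm_sub_of_inner_eq_zero (horth hx)
    _ < 0 + ε := by rwa [zero_add, ← dist_eq_norm]

lemma eq_of_forall_inner_e_eq {v w : M} (h : ∀ i, S.inner (S.e i) v = S.inner (S.e i) w) :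
    v = w :=
  sub_eq_zero.mp (S.eq_zero_of_forall_inner_e_eq_zero fun i => by rw [inner_sub_right, h, sub_self])

lemma CI.exists_isUnit_inner_e {g : M} (hg : S.CI g) : ∃ i, IsUnit (S.inner (S.e i) g) := by
  by_contra! hc
  exact hg.1 (S.eq_zero_of_forall_inner_e_eq_zero fun i => (hg.2 i).resolve_left (hc i))

lemma inner_eq_mul_of_ker_subset {g₁ g₂ y : M}
    (h : ∀ x : M, S.inner x g₁ = 0 → S.inner x g₂ = 0) (u : Aˣ) (hu : S.inner y g₁ = u)
    (x : M) : S.inner x g₂ = S.inner x g₁ * ↑u⁻¹ * S.inner y g₂ := by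
  have hker : S.inner ((S.inner x g₁ * ↑u⁻¹) • y - x) g₁ = 0 := by
    rw [inner_sub_left, S.inner_smul_left, hu, Units.inv_mul_cancel_right, sub_self]
  have := h _ hker
  rw [inner_sub_left, S.inner_smul_left, sub_eq_zero] at this
  exact this.symm

end StdHilbertModule

open StdHilbertModule in
/-- If `g₁` is coordinately invertible and for every `x`, `⟨x,g₁⟩ = 0` implies `⟨x,g₂⟩ = 0`,
then `g₂ = a • g₁` for some `a ∈ 𝒜`. -/
theorem exists_smul_of_ker_subset {A : Type*} [CStarAlgebra A] {M : Type*}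
    [NormedAddCommGroup M] [Module A M] (S : StdHilbertModule A M) (g₁ g₂ : M)
    (hg₁ : S.CI g₁) (h : ∀ x : M, S.inner x g₁ = 0 → S.inner x g₂ = 0) :
    ∃ a : A, g₂ = a • g₁ := by
  obtain ⟨i, u, hu⟩ := hg₁.exists_isUnit_inner_e
  refine ⟨star (↑u⁻¹ * S.inner (S.e i) g₂), S.eq_of_forall_inner_e_eq fun j => ?_⟩
  rw [S.inner_smul_right, star_star, ← mul_assoc]
  exact S.inner_eq_mul_of_ker_subset h u hu.symm (S.e j)
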